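/- Let a, c ∈ ℝᶜ and suppose index y is NOT a maximal coordinate of a, i.e., there exists j with a_j > a_y. Then the softmax confidence on class y of z(s) = s·a + c tends to 0 as s → ∞: exp(z(s)_y)/∑_j exp(z(s)_j) → 0. -/

import Mathlib

noncomputable def softmax {C : ℕ} (z : Fin C → ℝ) (i : Fin C) : ℝ :=
  Real.exp (z i) / ∑ j, Real.exp (z j)

/- The softmax weight of `y` is at most `exp (z y - z j)` for any rival class `j`; along
`z(s) = s • a + c` this exponent is affine in `s` with slope `a y - a j < 0`. -/

open Filter Real

theorem softmax_nonneg {C : ℕ} (z : Fin C → ℝ) (i : Fin C) : 0 ≤ softmax z i :=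
  div_nonneg (exp_pos _).le (Finset.sum_nonneg fun _ _ => (exp_pos _).le)

theorem softmax_le_exp_sub {C : ℕ} (z : Fin C → ℝ) (i j : Fin C) :
    softmax z i ≤ exp (z i - z j) := by
  have hden : exp (z j) ≤ ∑ k, exp (z k) :=
    Finset.single_le_sum (fun k _ => (exp_pos (z k)).le) (Finset.mem_univ j)
  rw [exp_sub]
  exact div_le_div_of_nonneg_left (exp_pos _).le (exp_pos _) hden

theorem tendsto_exp_mul_add_atTop_of_neg {m : ℝ} (hm : m < 0) (b : ℝ) :
    Tendsto (fun s : ℝ => exp (s * m + b)) atTop (nhds 0) :=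
  tendsto_exp_atBot.comp <|
    tendsto_atBot_add_const_right _ b (tendsto_id.atTop_mul_const_of_neg hm)

/-- If y is not a maximal coordinate of a, then the softmax confidence on y of
z(s) = s·a + c tends to 0 as s → ∞. -/
theorem confidence_tendsto_zero {C : ℕ} (a c : Fin C → ℝ) (y : Fin C)
    (hnotmax : ∃ j, a y < a j) :
    Filter.Tendsto (fun s : ℝ => softmax (fun i => s * a i + c i) y)
      Filter.atTop (nhds 0) := by
  obtain ⟨j, hj⟩ := hnotmax
  have hexp := tendsto_exp_mul_add_atTop_of_neg (sub_neg.mpr hj) (c y - c j)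
  refine squeeze_zero (fun s => softmax_nonneg _ y) (fun s => ?_) hexp
  calc softmax (fun i => s * a i + c i) y
      ≤ exp ((s * a y + c y) - (s * a j + c j)) := softmax_le_exp_sub _ y j
    _ = exp (s * (a y - a j) + (c y - c j)) := by ring_nf
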